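/- Let n ≥ 2, m ≥ 2, and let P be an ergodic m-th order, n-dimensional stochastic tensor on S = {1,…,n}. Then the tensor equation μ = E + (μ − μ_d) ⊠ P, regarded as a linear system in the n^m unknown entries of the m-th order, n-dimensional tensor μ, has a unique solution (whose entries are the mean first passage times of the chain). Here E is the all-ones m-th order, n-dimensional tensor and μ_d is the diagonal part of μ. -/

import Mathlib

/-!
Write `T f = (f - f_d) ⊠ P`, so that the equation reads `(id - T) μ = E`. Since `T` is linear
on a finite-dimensional space, it suffices that `T f = f` forces `f = 0`. This is a maximum
principle: fix `i₁` and let `M > 0` be the maximum of `|f i₁ t|` over the tails `t`. At a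
maximising `t` the equation `f i₁ t = Σ_{j ≠ i₁} p_{j t} f i₁ (j, init t)` writes `|f i₁ t|` as at
most an average of values `≤ M` with total weight `1 - p_{i₁ t}`, so `p_{i₁ t} = 0` and every
successor tail `(j, init t)` reached with positive probability is again maximising. Hence the
chain started from a maximising tail never reaches `i₁`, i.e. `p^{(k)}_{i₁ t} = 0` for all
`k ≥ 1`, contradicting ergodicity.
-/

open Finset

/-- An `m`-th order, `n`-dimensional tensor with `m = r + 2`: the entry
`p_{i₁ i₂ … i_m}` is written `P i₁ t`, where `t = (i₂, …, i_m)` is the tail of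
`m - 1 = r + 1` indices. -/
abbrev HOTensor (n r : ℕ) := Fin n → (Fin (r + 1) → Fin n) → ℝ

/-- `P` is a stochastic tensor. -/
def IsStochasticT {n r : ℕ} (P : HOTensor n r) : Prop :=
  (∀ i t, 0 ≤ P i t ∧ P i t ≤ 1) ∧ ∀ t, ∑ i : Fin n, P i t = 1

/-- The product `A ⊠ B`:
`(A ⊠ B)_{i₁ i₂ … i_m} = Σ_j a_{i₁ j i₂ … i_{m-1}} b_{j i₂ … i_m}`. -/
def tmul {n r : ℕ} (A B : HOTensor n r) : HOTensor n r :=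
  fun i t => ∑ j : Fin n, A i (Fin.cons j (Fin.init t)) * B j t

/-- Tensor powers: `tpow P k` is `P^k`, with entries the `k`-step transition
probabilities `p^{(k)}_{i₁ … i_m}`; `P^0` is the identity tensor. -/
def tpow {n r : ℕ} (P : HOTensor n r) : ℕ → HOTensor n r
  | 0 => fun i t => if i = t 0 then 1 else 0
  | k + 1 => tmul (tpow P k) P

/-- `fpp P k` is the `(k+1)`-step first passage probability tensor `F^{[k+1]}`:
`f^{[1]} = p`, and `f^{[k+1]}_{i₁ i₂ … i_m} = Σ_{j ≠ i₁} f^{[k]}_{i₁ j i₂ … i_{m-1}} p_{j i₂ … i_m}`. -/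
def fpp {n r : ℕ} (P : HOTensor n r) : ℕ → HOTensor n r
  | 0 => P
  | k + 1 => fun i t =>
      ∑ j ∈ Finset.univ.filter (fun j => j ≠ i), fpp P k i (Fin.cons j (Fin.init t)) * P j t

/-- The ever-reaching probability `f_{i₁ i₂ … i_m} = Σ_{k=1}^∞ f^{[k]}_{i₁ i₂ … i_m}`. -/
noncomputable def everReach {n r : ℕ} (P : HOTensor n r) : HOTensor n r :=
  fun i t => ∑' k : ℕ, fpp P k i t

/-- State `j` is reachable from state `i` (`i → j`): for every choice of
`i₃, …, i_m` there is `k ≥ 0` with `p^{(k)}_{j i i₃ … i_m} > 0`. -/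
def Reach {n r : ℕ} (P : HOTensor n r) (i j : Fin n) : Prop :=
  ∀ u : Fin r → Fin n, ∃ k : ℕ, 0 < tpow P k j (Fin.cons i u)

/-- States `i` and `j` communicate (`i ↔ j`). -/
def Comm {n r : ℕ} (P : HOTensor n r) (i j : Fin n) : Prop :=
  Reach P i j ∧ Reach P j i

/-- State `i` is recurrent: `f_{i i i₃ … i_m} = 1` for all `i₃, …, i_m`. -/
def RecurrentState {n r : ℕ} (P : HOTensor n r) (i : Fin n) : Prop :=
  ∀ u : Fin r → Fin n, everReach P i (Fin.cons i u) = 1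

/-- State `i` is fully transient: `f_{i i i₃ … i_m} < 1` for all `i₃, …, i_m`. -/
def FullyTransientState {n r : ℕ} (P : HOTensor n r) (i : Fin n) : Prop :=
  ∀ u : Fin r → Fin n, everReach P i (Fin.cons i u) < 1

/-- `P` is ergodic: for all indices there is `k ≥ 1` with `p^{(k)}_{i₁ … i_m} > 0`. -/
def ErgodicT {n r : ℕ} (P : HOTensor n r) : Prop :=
  ∀ (i : Fin n) (t : Fin (r + 1) → Fin n), ∃ k : ℕ, 1 ≤ k ∧ 0 < tpow P k i t

/-- `P` is regular: some power `P^k`, `k ≥ 1`, has all entries positive. -/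
def RegularT {n r : ℕ} (P : HOTensor n r) : Prop :=
  ∃ k : ℕ, 1 ≤ k ∧ ∀ (i : Fin n) (t : Fin (r + 1) → Fin n), 0 < tpow P k i t

/-- The reduced transition matrix `Q` of `P`: rows and columns are indexed by
`(m-1)`-tuples; the entry in row `(i₁, …, i_{m-1})` and column `(j₁, …, j_{m-1})`
is `p_{i₁ i₂ … i_{m-1} j_{m-1}}` if `j_ℓ = i_{ℓ+1}` for `ℓ = 1, …, m-2`, else `0`. -/
def reducedT {n r : ℕ} (P : HOTensor n r) :
    Matrix (Fin (r + 1) → Fin n) (Fin (r + 1) → Fin n) ℝ :=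
  fun u v =>
    if ∀ ℓ : Fin r, v ℓ.castSucc = u ℓ.succ then
      P (u 0) (Fin.snoc (Fin.tail u) (v (Fin.last r)))
    else 0

/-- The diagonal part `A_d` of a tensor: its `(i₁, i₂, i₃, …, i_m)` entry is
`a_{i₁ i₁ i₃ … i_m}` if `i₁ = i₂`, and `0` otherwise. -/
def diagPart {n r : ℕ} (A : HOTensor n r) : HOTensor n r :=
  fun i t => if t 0 = i then A i t else 0


variable {n r : ℕ}

lemma eq_of_le_sum_mul {ι R : Type*} [Field R] [LinearOrder R] [IsStrictOrderedRing R]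
    {s : Finset ι} {w a : ι → R} {M : R}
    (hw : ∀ j ∈ s, 0 ≤ w j) (hw1 : ∑ j ∈ s, w j = 1) (ha : ∀ j ∈ s, a j ≤ M)
    (hM : M ≤ ∑ j ∈ s, w j * a j) {j : ι} (hj : j ∈ s) (hwj : w j ≠ 0) : a j = M := by
  have hnonneg : ∀ k ∈ s, 0 ≤ w k * (M - a k) :=
    fun k hk => mul_nonneg (hw k hk) (sub_nonneg.mpr (ha k hk))
  have hzero : ∑ k ∈ s, w k * (M - a k) = 0 := by
    refine le_antisymm ?_ (sum_nonneg hnonneg)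
    simp only [mul_sub, sum_sub_distrib, ← sum_mul, hw1, one_mul]
    linarith
  have := (sum_eq_zero_iff_of_nonneg hnonneg).mp hzero j hj
  linarith [(mul_eq_zero.mp this).resolve_left hwj]

def offDiagStep (P : HOTensor n r) : HOTensor n r →ₗ[ℝ] HOTensor n r where
  toFun f := tmul (fun i t => f i t - diagPart f i t) P
  map_add' f g := by
    funext i t
    simp only [tmul, diagPart, Pi.add_apply, ← sum_add_distrib]
    refine sum_congr rfl fun j _ => ?_
    split_ifs <;> ring
  map_smul' c f := by
    funext i t
    simp only [tmul, diagPart, Pi.smul_apply, smul_eq_mul, RingHom.id_apply, mul_sum]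
    refine sum_congr rfl fun j _ => ?_
    split_ifs <;> ring

lemma offDiagStep_apply (P f : HOTensor n r) (i : Fin n) (t : Fin (r + 1) → Fin n) :
    offDiagStep P f i t = ∑ j ∈ univ.erase i, P j t * f i (Fin.cons j (Fin.init t)) := by
  change ∑ j : Fin n, _ = _
  rw [← sum_erase _ (a := i) (by simp [diagPart])]
  refine sum_congr rfl fun j hj => ?_
  simp [diagPart, ne_of_mem_erase hj, mul_comm]

lemma tpow_succ_eq_zero_of_forall_mem {P : HOTensor n r} {i : Fin n}
    {Z : Set (Fin (r + 1) → Fin n)} (hZi : ∀ t ∈ Z, P i t = 0)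
    (hZ : ∀ t ∈ Z, ∀ j ≠ i, P j t ≠ 0 → Fin.cons j (Fin.init t) ∈ Z) (k : ℕ) :
    ∀ t ∈ Z, tpow P (k + 1) i t = 0 := by
  induction k with
  | zero =>
    intro t ht
    simp [tpow, tmul, Fin.cons_zero, hZi t ht]
  | succ k ih =>
    intro t ht
    change ∑ j : Fin n, tpow P (k + 1) i (Fin.cons j (Fin.init t)) * P j t = 0
    refine sum_eq_zero fun j _ => ?_
    by_cases hj : j = i
    · simp [hj, hZi t ht]
    by_cases hPj : P j t = 0
    · simp [hPj]
    · simp [ih _ (hZ t ht j hj hPj)]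

lemma argmax_step_of_offDiagStep_eq_self {P : HOTensor n r} (hP : IsStochasticT P)
    {f : HOTensor n r} (hf : offDiagStep P f = f) {i : Fin n} {M : ℝ} (hM : 0 < M)
    (hfM : ∀ t, |f i t| ≤ M) {t : Fin (r + 1) → Fin n} (ht : |f i t| = M) :
    P i t = 0 ∧ ∀ j ≠ i, P j t ≠ 0 → |f i (Fin.cons j (Fin.init t))| = M := by
  have hP0 : ∀ j, 0 ≤ P j t := fun j => (hP.1 j t).1
  have hweight : ∑ j ∈ univ.erase i, P j t = 1 - P i t := by
    rw [sum_erase_eq_sub (mem_univ i), hP.2 t]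
  have hle : M ≤ ∑ j ∈ univ.erase i, P j t * |f i (Fin.cons j (Fin.init t))| :=
    calc M = |offDiagStep P f i t| := by rw [hf, ht]
      _ ≤ _ := by
        rw [offDiagStep_apply]
        refine (abs_sum_le_sum_abs _ _).trans_eq (sum_congr rfl fun j _ => ?_)
        rw [abs_mul, abs_of_nonneg (hP0 j)]
  have hPi : P i t = 0 := by
    have : ∑ j ∈ univ.erase i, P j t * |f i (Fin.cons j (Fin.init t))| ≤ (1 - P i t) * M := by
      rw [← hweight, sum_mul]
      exact sum_le_sum fun j _ => mul_le_mul_of_nonneg_left (hfM _) (hP0 j)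
    nlinarith [hP0 i]
  refine ⟨hPi, fun j hj hPj => ?_⟩
  exact eq_of_le_sum_mul (fun j _ => hP0 j) (by rw [hweight, hPi, sub_zero])
    (fun _ _ => hfM _) hle (mem_erase.mpr ⟨hj, mem_univ j⟩) hPj

lemma eq_zero_of_offDiagStep_eq_self {P : HOTensor n r} (hP : IsStochasticT P)
    (herg : ErgodicT P) {f : HOTensor n r} (hf : offDiagStep P f = f) : f = 0 := by
  funext i t
  by_contra hft
  obtain ⟨t₀, -, ht₀⟩ := exists_max_image univ (fun t => |f i t|) ⟨t, mem_univ t⟩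
  have hfM : ∀ t, |f i t| ≤ |f i t₀| := fun t => ht₀ t (mem_univ t)
  have hM : 0 < |f i t₀| := (abs_pos.mpr hft).trans_le (hfM t)
  obtain ⟨k, hk, hpos⟩ := herg i t₀
  obtain ⟨k, rfl⟩ := Nat.exists_eq_add_of_le' hk
  have hstep := fun t (ht : |f i t| = |f i t₀|) =>
    argmax_step_of_offDiagStep_eq_self hP hf hM hfM ht
  exact hpos.ne' (tpow_succ_eq_zero_of_forall_mem (Z := {t | |f i t| = |f i t₀|})
    (fun t ht => (hstep t ht).1) (fun t ht => (hstep t ht).2) k t₀ rfl)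

lemma bijective_one_sub_offDiagStep {P : HOTensor n r} (hP : IsStochasticT P)
    (herg : ErgodicT P) :
    Function.Bijective (1 - offDiagStep P : Module.End ℝ (HOTensor n r)) := by
  have hinj : Function.Injective (1 - offDiagStep P : Module.End ℝ (HOTensor n r)) := by
    rw [← LinearMap.ker_eq_bot, LinearMap.ker_eq_bot']
    intro f hf
    exact eq_zero_of_offDiagStep_eq_self hP herg (sub_eq_zero.mp hf).symm
  exact ⟨hinj, LinearMap.injective_iff_surjective.mp hinj⟩

theorem mfpt_unique_solution_general (n r : ℕ)
    (P : HOTensor n r) (hP : IsStochasticT P) (herg : ErgodicT P) :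
    ∃! μ : HOTensor n r, ∀ (i : Fin n) (t : Fin (r + 1) → Fin n),
      μ i t = 1 + tmul (fun i' t' => μ i' t' - diagPart μ i' t') P i t := by
  have hsol : ∀ μ : HOTensor n r, (1 - offDiagStep P : Module.End ℝ (HOTensor n r)) μ = 1 ↔
      ∀ i t, μ i t = 1 + tmul (fun i' t' => μ i' t' - diagPart μ i' t') P i t := by
    intro μ
    rw [LinearMap.sub_apply, Module.End.one_apply, sub_eq_iff_eq_add']
    simp only [funext_iff, Pi.add_apply, Pi.one_apply, add_comm]
    rfl
  simpa only [hsol] using (bijective_one_sub_offDiagStep hP herg).existsUnique 1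

/-- for an ergodic chain, the mean first passage time equation
`μ = E + (μ - μ_d) ⊠ P` has a unique solution `μ`. -/
theorem mfpt_unique_solution (n r : ℕ) (hn : 2 ≤ n)
    (P : HOTensor n r) (hP : IsStochasticT P) (herg : ErgodicT P) :
    ∃! μ : HOTensor n r, ∀ (i : Fin n) (t : Fin (r + 1) → Fin n),
      μ i t = 1 + tmul (fun i' t' => μ i' t' - diagPart μ i' t') P i t :=
  mfpt_unique_solution_general n r P hP herg
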